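/- Let t ≥ 2 and d ≥ 2 be integers, and let n ≥ 2d be a natural number with the property that there exists a natural number r with n^t ≡ r^t (mod d) and 0 ≤ r^t < d. Then ⌊n^t/d⌋ is not prime. -/

import Mathlib

/-!
Write `n ^ t = d q + r ^ t` with `r < d`. Then `d q = n ^ t - r ^ t = (n - r) s` with
`s = ∑ r ^ i n ^ (t - 1 - i) ≥ n ^ (t - 1)`, and both factors `n - r` and `s` exceed `d`
because `n ≥ 2 d` and `t ≥ 2`. Hence `q` is larger than both factors, yet a prime `q` would have
to divide one of them.
-/

open Finset

theorem Nat.not_prime_of_mul_eq_mul_of_lt {a b d q : ℕ} (h : a * b = d * q) (ha : d < a)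
    (hb : d < b) : ¬ q.Prime := by
  intro hq
  have hd : 0 < d := Nat.pos_of_ne_zero fun hd => by simp_all; omega
  have hqa : a < q := Nat.lt_of_mul_lt_mul_left (a := d) (by rw [← h]; nlinarith)
  have hqb : b < q := Nat.lt_of_mul_lt_mul_left (a := d) (by rw [← h]; nlinarith)
  rcases hq.dvd_mul.mp ⟨d, by rw [h, mul_comm]⟩ with hdvd | hdvd
  · exact absurd (Nat.le_of_dvd (by omega) hdvd) (by omega)
  · exact absurd (Nat.le_of_dvd (by omega) hdvd) (by omega)

theorem pow_pred_le_geom_sum₂ {R : Type*} [CommSemiring R] [PartialOrder R] [IsOrderedRing R]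
    {x y : R} (hx : 0 ≤ x) (hy : 0 ≤ y) {t : ℕ} (ht : 0 < t) :
    y ^ (t - 1) ≤ ∑ i ∈ range t, x ^ i * y ^ (t - 1 - i) := by
  simpa using single_le_sum (f := fun i => x ^ i * y ^ (t - 1 - i))
    (fun i _ => by positivity) (mem_range.mpr ht)

theorem stmt3_general (t d n : ℕ) (ht : 2 ≤ t) (hn : 2 * d ≤ n)
    (h : ∃ r : ℕ, n ^ t ≡ r ^ t [MOD d] ∧ r ^ t < d) :
    ¬ Nat.Prime (n ^ t / d) := by
  obtain ⟨r, hmod, hrt⟩ := h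
  have hr : r < d := (Nat.le_self_pow (by omega) r).trans_lt hrt
  have hrem : n ^ t % d = r ^ t := Nat.mod_eq_of_lt hrt ▸ hmod
  have hfactor : (n - r) * ∑ i ∈ range t, r ^ i * n ^ (t - 1 - i) = d * (n ^ t / d) := by
    rw [mul_comm, geom_sum₂_mul_of_le (by omega)]
    have := Nat.div_add_mod (n ^ t) d
    omega
  refine Nat.not_prime_of_mul_eq_mul_of_lt hfactor (by omega) ?_
  calc d < n := by omega
    _ ≤ n ^ (t - 1) := Nat.le_self_pow (by omega) n
    _ ≤ _ := pow_pred_le_geom_sum₂ (Nat.zero_le r) (Nat.zero_le n) (by omega)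

theorem stmt3 (t d n : ℕ) (ht : 2 ≤ t) (hd : 2 ≤ d) (hn : 2 * d ≤ n)
    (h : ∃ r : ℕ, n ^ t ≡ r ^ t [MOD d] ∧ r ^ t < d) :
    ¬ Nat.Prime (n ^ t / d) :=
  stmt3_general t d n ht hn h
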